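/- arXiv:1209.1573 — 4 statements merged into one kernel-verified Lean document; each statement's English description precedes it below -/
import Mathlib

section
/- Let n ≥ 1, let a_1 ≤ a_2 ≤ … ≤ a_n be positive reals, and let t satisfy 0 < t ≤ 1/(2 a_n). Then ( ∏_{j=1}^n √( a_j/(π(1 − exp(−2 a_j t))) ) ) · exp( −16 a_n/(1 − exp(−2 a_n t)) ) ≤ exp(−8/t) · (1/(tπ))^{n/2}. If moreover 1/(2 a_n) ≤ 16/n, then the left-hand side is at most exp(−16 a_n) · (2 a_n/π)^{n/2}. -/
open Real

/-!
For `0 ≤ x ≤ 1` we have `x / 2 ≤ 1 - e^{-x} ≤ x`, so once `2 a_j t ≤ 1` each ratio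
`a_j / (1 - e^{-2 a_j t})` lies between `1 / (2t)` and `1 / t`; this gives the first bound.
For the second, `t ↦ e^{-8/t} t^{-n/2}` is nondecreasing on `(0, 16/n]`, and
`t ≤ 1/(2 a_n) ≤ 16/n`, so the bound at `t` is at most its value at `1/(2 a_n)`.
-/

namespace Real

lemma half_le_one_sub_exp_neg {x : ℝ} (hx₀ : 0 ≤ x) (hx₁ : x ≤ 1) :
    x / 2 ≤ 1 - exp (-x) := by
  have hexp : exp (-x) ≤ 1 / (1 + x) := by
    rw [exp_neg, inv_eq_one_div]
    exact one_div_le_one_div_of_le (by linarith) (by linarith [add_one_le_exp x])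
  have : x / 2 ≤ 1 - 1 / (1 + x) := by
    rw [one_sub_div (by linarith), le_div_iff₀ (by linarith)]
    nlinarith
  linarith

lemma one_sub_exp_neg_le (x : ℝ) : 1 - exp (-x) ≤ x := by
  linarith [add_one_le_exp (-x)]

lemma rpow_le_exp_mul_sub_one {x : ℝ} (hx : 0 < x) {m : ℝ} (hm : 0 ≤ m) :
    x ^ m ≤ exp (m * (x - 1)) := by
  rw [rpow_def_of_pos hx, mul_comm, exp_le_exp]
  exact mul_le_mul_of_nonneg_left (log_le_sub_one_of_pos hx) hm

lemma prod_sqrt_le_rpow {ι : Type*} [Fintype ι] {f : ι → ℝ} {c : ℝ} (hc : 0 ≤ c)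
    (hf : ∀ i, f i ≤ c) : ∏ i, √(f i) ≤ c ^ ((Fintype.card ι : ℝ) / 2) := by
  calc ∏ i, √(f i) ≤ ∏ _i : ι, √c :=
        Finset.prod_le_prod (fun i _ => sqrt_nonneg _) fun i _ => sqrt_le_sqrt (hf i)
    _ = c ^ ((Fintype.card ι : ℝ) / 2) := by
        rw [Finset.prod_const, Finset.card_univ, sqrt_eq_rpow, ← rpow_mul_natCast hc]
        ring_nf

lemma exp_neg_div_mul_rpow_le {k m c t s : ℝ} (hm : 0 ≤ m) (hc : 0 < c) (ht : 0 < t)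
    (hts : t ≤ s) (hms : m * s ≤ k) :
    exp (-k / t) * (1 / (t * c)) ^ m ≤ exp (-k / s) * (1 / (s * c)) ^ m := by
  have hs : 0 < s := ht.trans_le hts
  have hsplit : (1 / (t * c)) ^ m = (1 / (s * c)) ^ m * (s / t) ^ m := by
    rw [← mul_rpow (by positivity) (by positivity)]
    congr 1
    field_simp
  have hexponent : m * (s / t - 1) ≤ k / t - k / s := by
    have : 0 ≤ s / t - 1 := by rw [sub_nonneg, one_le_div ht]; exact hts
    calc m * (s / t - 1) ≤ k / s * (s / t - 1) :=
          mul_le_mul_of_nonneg_right ((le_div_iff₀ hs).2 hms) this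
      _ = k / t - k / s := by field_simp
  calc exp (-k / t) * (1 / (t * c)) ^ m
      = exp (-k / t) * (s / t) ^ m * (1 / (s * c)) ^ m := by rw [hsplit]; ring
    _ ≤ exp (-k / t) * exp (m * (s / t - 1)) * (1 / (s * c)) ^ m := by
        gcongr; exact rpow_le_exp_mul_sub_one (by positivity) hm
    _ ≤ exp (-k / s) * (1 / (s * c)) ^ m := by
        rw [← exp_add]; gcongr; linarith [neg_div t k, neg_div s k]

end Real

section OrnsteinUhlenbeck

variable {b t : ℝ}

lemma one_div_two_mul_le_div_one_sub_exp (hb : 0 < b) (ht : 0 < t) :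
    1 / (2 * t) ≤ b / (1 - exp (-2 * b * t)) := by
  have hD : 0 < 1 - exp (-2 * b * t) := by
    rw [sub_pos, exp_lt_one_iff]; nlinarith
  rw [div_le_div_iff₀ (by positivity) hD]
  have := one_sub_exp_neg_le (2 * b * t)
  rw [show -(2 * b * t) = -2 * b * t by ring] at this
  nlinarith

lemma div_one_sub_exp_le_one_div (hb : 0 < b) (ht : 0 < t) (hbt : 2 * b * t ≤ 1) :
    b / (1 - exp (-2 * b * t)) ≤ 1 / t := by
  have := half_le_one_sub_exp_neg (by positivity) hbt
  rw [show -(2 * b * t) = -2 * b * t by ring] at this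
  rw [div_le_div_iff₀ (by nlinarith) ht]
  nlinarith

end OrnsteinUhlenbeck

/-- Step 1 of the Green function upper bound: for a nondecreasing sequence of positive reals
`a_1 ≤ … ≤ a_n` and `0 < t ≤ 1/(2 a_n)`, the Ornstein-Uhlenbeck transition density factor
`∏_j √(a_j/(π(1 - e^{-2 a_j t}))) ⋅ exp(-16 a_n/(1 - e^{-2 a_n t}))` is at most
`exp(-8/t) (1/(tπ))^(n/2)`; and if moreover `1/(2 a_n) ≤ 16/n`, it is at most
`exp(-16 a_n) (2 a_n/π)^(n/2)`. -/
theorem OU_green_function_upper_bound_step1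
    (n : ℕ) (hn : 1 ≤ n) (a : Fin n → ℝ) (hpos : ∀ j, 0 < a j) (hmono : Monotone a)
    (t : ℝ) (ht : 0 < t) (htn : t ≤ 1 / (2 * a ⟨n - 1, by omega⟩)) :
    (∏ j, Real.sqrt (a j / (π * (1 - Real.exp (-2 * a j * t))))) *
        Real.exp (-16 * a ⟨n - 1, by omega⟩ /
          (1 - Real.exp (-2 * a ⟨n - 1, by omega⟩ * t))) ≤
      Real.exp (-8 / t) * (1 / (t * π)) ^ ((n : ℝ) / 2) ∧
    (1 / (2 * a ⟨n - 1, by omega⟩) ≤ 16 / (n : ℝ) →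
      (∏ j, Real.sqrt (a j / (π * (1 - Real.exp (-2 * a j * t))))) *
          Real.exp (-16 * a ⟨n - 1, by omega⟩ /
            (1 - Real.exp (-2 * a ⟨n - 1, by omega⟩ * t))) ≤
        Real.exp (-16 * a ⟨n - 1, by omega⟩) *
          (2 * a ⟨n - 1, by omega⟩ / π) ^ ((n : ℝ) / 2)) := by
  set N : Fin n := ⟨n - 1, by omega⟩
  have hNpos := hpos N
  have hsmall : ∀ j, 2 * a j * t ≤ 1 := fun j => calc
    2 * a j * t ≤ 2 * a N * t := by gcongr; exact hmono (Fin.mk_le_mk.2 (by omega))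
    _ ≤ 1 := by rw [le_div_iff₀ (by positivity)] at htn; linarith
  have hprod :
      ∏ j, √(a j / (π * (1 - exp (-2 * a j * t)))) ≤ (1 / (t * π)) ^ ((n : ℝ) / 2) := by
    have := prod_sqrt_le_rpow (f := fun j => a j / (π * (1 - exp (-2 * a j * t))))
      (c := 1 / (t * π)) (by positivity) fun j => by
        rw [mul_comm π, ← div_div, ← div_div]
        exact div_le_div_of_nonneg_right (div_one_sub_exp_le_one_div (hpos j) ht (hsmall j))
          pi_pos.le
    rwa [Fintype.card_fin] at this
  have hexp : exp (-16 * a N / (1 - exp (-2 * a N * t))) ≤ exp (-8 / t) := by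
    have := one_div_two_mul_le_div_one_sub_exp hNpos ht
    rw [exp_le_exp, mul_div_assoc]
    calc -16 * (a N / (1 - exp (-2 * a N * t))) ≤ -16 * (1 / (2 * t)) := by linarith
      _ = -8 / t := by field_simp; ring
  have hfirst := calc
    _ ≤ (1 / (t * π)) ^ ((n : ℝ) / 2) * exp (-8 / t) :=
      mul_le_mul hprod hexp (exp_pos _).le (by positivity)
    _ = exp (-8 / t) * (1 / (t * π)) ^ ((n : ℝ) / 2) := mul_comm _ _
  refine ⟨hfirst, fun hN => hfirst.trans ?_⟩
  have hms : (n : ℝ) / 2 * (1 / (2 * a N)) ≤ 8 := by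
    rw [le_div_iff₀ (by positivity)] at hN
    linarith
  have hlarger := exp_neg_div_mul_rpow_le (by positivity) pi_pos ht htn hms
  rwa [show -8 / (1 / (2 * a N)) = -16 * a N by field_simp; ring,
    show 1 / (1 / (2 * a N) * π) = 2 * a N / π by field_simp] at hlarger
end

section
/- Let H be a real Hilbert space, m ≥ 1, and let A : Fin m → H → H be vector fields, each twice continuously differentiable. Define (∇_{A^k} h)(x) = (Dh)(x)[A^k(x)], L h = ∑_{k=1}^m ∇_{A^k}(∇_{A^k} h), Γ(f,g) = ∑_{k=1}^m (∇_{A^k} f)(∇_{A^k} g), and Γ₂(f) = (1/2)·L(Γ(f,f)) − Γ(f, Lf). Then for every three times continuously differentiable g : H → ℝ with g(x) > 0 for all x: Γ₂(log∘g) = Γ(g,g)²/g⁴ − Γ(g, Γ(g,g))/g³ + Γ₂(g)/g². -/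
/-!
Each `∇_{Aᵏ}` is a derivation obeying the chain rule, so `Γ` and `L` satisfy the diffusion rules
`Γ(φ ∘ g, h) = φ'(g) Γ(g, h)`, `L(φ ∘ g) = φ'(g) L g + φ''(g) Γ(g, g)` and
`L(u v) = u L v + v L u + 2 Γ(u, v)`. Substituting them into `Γ₂` gives the Bakry–Émery chain rule
`Γ₂(φ ∘ g) = φ'(g)² Γ₂(g) + φ'(g) φ''(g) Γ(g, Γ(g, g)) + φ''(g)² Γ(g, g)²`, in which the terms
carrying `φ'''` cancel. For `φ = log` one has `φ'(g) = 1/g` and `φ''(g) = -1/g²`.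
-/

/-- Directional derivative along a vector field `A`: `(∇_A h)(x) = (Dh)(x)[A(x)]`. -/
noncomputable def nablaA {H : Type*} [NormedAddCommGroup H] [NormedSpace ℝ H]
    (A : H → H) (h : H → ℝ) : H → ℝ := fun x => fderiv ℝ h x (A x)

/-- Hörmander-form operator `L = ∑ₖ (∇_{Aᵏ})²`. -/
noncomputable def hormL {H : Type*} [NormedAddCommGroup H] [NormedSpace ℝ H]
    {m : ℕ} (A : Fin m → H → H) (f : H → ℝ) : H → ℝ :=
  fun x => ∑ k, nablaA (A k) (nablaA (A k) f) x

/-- Carré du champ `Γ(f,g) = ∑ₖ (∇_{Aᵏ} f)(∇_{Aᵏ} g)`. -/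
noncomputable def GammaA {H : Type*} [NormedAddCommGroup H] [NormedSpace ℝ H]
    {m : ℕ} (A : Fin m → H → H) (f g : H → ℝ) : H → ℝ :=
  fun x => ∑ k, nablaA (A k) f x * nablaA (A k) g x

/-- Iterated carré du champ `Γ₂(f) = (1/2) L(Γ(f,f)) - Γ(f, Lf)`. -/
noncomputable def Gamma2A {H : Type*} [NormedAddCommGroup H] [NormedSpace ℝ H]
    {m : ℕ} (A : Fin m → H → H) (f : H → ℝ) : H → ℝ :=
  fun x => (1 / 2) * hormL A (GammaA A f f) x - GammaA A f (hormL A f) x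

section DirectionalDerivative

variable {H : Type*} [NormedAddCommGroup H] [NormedSpace ℝ H] (A : H → H) {f h : H → ℝ} {x : H}

theorem nablaA_add (hf : DifferentiableAt ℝ f x) (hh : DifferentiableAt ℝ h x) :
    nablaA A (fun y => f y + h y) x = nablaA A f x + nablaA A h x := by
  simp [nablaA, fderiv_fun_add hf hh]

theorem nablaA_mul (hf : DifferentiableAt ℝ f x) (hh : DifferentiableAt ℝ h x) :
    nablaA A (fun y => f y * h y) x = nablaA A f x * h x + f x * nablaA A h x := by
  simp only [nablaA, fderiv_fun_mul hf hh, add_apply, smul_apply,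
    smul_eq_mul]
  ring

theorem nablaA_comp {φ : ℝ → ℝ} {φ' : ℝ} (hφ : HasDerivAt φ φ' (f x))
    (hf : DifferentiableAt ℝ f x) : nablaA A (fun y => φ (f y)) x = φ' * nablaA A f x := by
  change fderiv ℝ (φ ∘ f) x (A x) = _
  simp [(hφ.comp_hasFDerivAt x hf.hasFDerivAt).fderiv, nablaA]

theorem contDiff_nablaA {n : ℕ} (hf : ContDiff ℝ (n + 1) f) (hA : ContDiff ℝ n A) :
    ContDiff ℝ n (nablaA A f) :=
  (hf.fderiv_right le_rfl).clm_apply hA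

end DirectionalDerivative

section CarreDuChamp

variable {H : Type*} [NormedAddCommGroup H] [NormedSpace ℝ H] {m : ℕ} (A : Fin m → H → H)
  {f g u v : H → ℝ} {x : H}

theorem GammaA_comm (u v : H → ℝ) : GammaA A u v = GammaA A v u := by
  funext x
  simp only [GammaA, mul_comm]

theorem GammaA_add_right (hu : DifferentiableAt ℝ u x) (hv : DifferentiableAt ℝ v x) :
    GammaA A f (fun y => u y + v y) x = GammaA A f u x + GammaA A f v x := by
  simp only [GammaA, nablaA_add _ hu hv, mul_add, Finset.sum_add_distrib]

theorem GammaA_mul_right (hu : DifferentiableAt ℝ u x) (hv : DifferentiableAt ℝ v x) :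
    GammaA A f (fun y => u y * v y) x = u x * GammaA A f v x + v x * GammaA A f u x := by
  simp only [GammaA, nablaA_mul _ hu hv, Finset.mul_sum, ← Finset.sum_add_distrib]
  exact Finset.sum_congr rfl fun k _ => by ring

theorem GammaA_comp_left {φ : ℝ → ℝ} {φ' : ℝ} (hφ : HasDerivAt φ φ' (f x))
    (hf : DifferentiableAt ℝ f x) :
    GammaA A (fun y => φ (f y)) u x = φ' * GammaA A f u x := by
  simp only [GammaA, nablaA_comp _ hφ hf, Finset.mul_sum, mul_assoc]

theorem contDiff_GammaA {n : ℕ} (hu : ContDiff ℝ (n + 1) u) (hv : ContDiff ℝ (n + 1) v)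
    (hA : ∀ k, ContDiff ℝ n (A k)) : ContDiff ℝ n (GammaA A u v) :=
  ContDiff.sum fun k _ => (contDiff_nablaA _ hu (hA k)).mul (contDiff_nablaA _ hv (hA k))

theorem contDiff_hormL {n : ℕ} (hf : ContDiff ℝ (n + 2) f) (hA : ∀ k, ContDiff ℝ (n + 1) (A k)) :
    ContDiff ℝ n (hormL A f) :=
  ContDiff.sum fun k _ =>
    contDiff_nablaA _ (contDiff_nablaA _ hf (hA k)) ((hA k).of_le le_self_add)

theorem GammaA_comp {φ φ' : ℝ → ℝ} (hφ : ∀ y, HasDerivAt φ (φ' (g y)) (g y))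
    (hg : Differentiable ℝ g) :
    GammaA A (fun y => φ (g y)) (fun y => φ (g y)) =
      fun y => φ' (g y) * φ' (g y) * GammaA A g g y := by
  funext y
  rw [GammaA_comp_left _ (hφ y) (hg y), GammaA_comm A g, GammaA_comp_left _ (hφ y) (hg y),
    mul_assoc]

theorem hormL_mul (hu : ContDiff ℝ 2 u) (hv : ContDiff ℝ 2 v) (hA : ∀ k, ContDiff ℝ 1 (A k)) :
    hormL A (fun y => u y * v y) =
      fun y => u y * hormL A v y + v y * hormL A u y + 2 * GammaA A u v y := by
  have hu₁ := hu.differentiable two_ne_zero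
  have hv₁ := hv.differentiable two_ne_zero
  have hu₂ k := (contDiff_nablaA (A k) (n := 1) hu (hA k)).differentiable one_ne_zero
  have hv₂ k := (contDiff_nablaA (A k) (n := 1) hv (hA k)).differentiable one_ne_zero
  have hleibniz k : nablaA (A k) (fun y => u y * v y) =
      fun y => nablaA (A k) u y * v y + u y * nablaA (A k) v y :=
    funext fun y => nablaA_mul _ (hu₁ y) (hv₁ y)
  funext x
  simp only [hormL, GammaA, hleibniz, Finset.mul_sum, ← Finset.sum_add_distrib]
  refine Finset.sum_congr rfl fun k _ => ?_
  rw [nablaA_add _ ((hu₂ k x).fun_mul (hv₁ x)) ((hu₁ x).fun_mul (hv₂ k x)),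
    nablaA_mul _ (hu₂ k x) (hv₁ x), nablaA_mul _ (hu₁ x) (hv₂ k x)]
  ring

theorem hormL_comp {φ φ' φ'' : ℝ → ℝ} (hφ : ∀ y, HasDerivAt φ (φ' (g y)) (g y))
    (hφ' : ∀ y, HasDerivAt φ' (φ'' (g y)) (g y)) (hg : ContDiff ℝ 2 g)
    (hA : ∀ k, ContDiff ℝ 1 (A k)) :
    hormL A (fun y => φ (g y)) =
      fun y => φ' (g y) * hormL A g y + φ'' (g y) * GammaA A g g y := by
  have hg₁ := hg.differentiable two_ne_zero
  have hg₂ k := (contDiff_nablaA (A k) (n := 1) hg (hA k)).differentiable one_ne_zero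
  have hchain k : nablaA (A k) (fun y => φ (g y)) = fun y => φ' (g y) * nablaA (A k) g y :=
    funext fun y => nablaA_comp _ (hφ y) (hg₁ y)
  funext x
  simp only [hormL, GammaA, hchain, Finset.mul_sum, ← Finset.sum_add_distrib]
  refine Finset.sum_congr rfl fun k _ => ?_
  rw [nablaA_mul _ (((hφ' x).differentiableAt).fun_comp' x (hg₁ x)) (hg₂ k x),
    nablaA_comp _ (hφ' x) (hg₁ x)]
  ring

end CarreDuChamp

section ChainRule

variable {H : Type*} [NormedAddCommGroup H] [NormedSpace ℝ H] {m : ℕ} (A : Fin m → H → H)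
  {g : H → ℝ} {φ φ' φ'' φ''' : ℝ → ℝ}

theorem hormL_GammaA_comp (hφ : ∀ y, HasDerivAt φ (φ' (g y)) (g y))
    (hφ' : ∀ y, HasDerivAt φ' (φ'' (g y)) (g y)) (hφ'' : ∀ y, HasDerivAt φ'' (φ''' (g y)) (g y))
    (hu : ContDiff ℝ 2 fun y => φ' (g y)) (hg : ContDiff ℝ 3 g) (hA : ∀ k, ContDiff ℝ 2 (A k))
    (x : H) :
    hormL A (GammaA A (fun y => φ (g y)) (fun y => φ (g y))) x =
      φ' (g x) ^ 2 * hormL A (GammaA A g g) x +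
        2 * φ' (g x) * (φ'' (g x) * hormL A g x + φ''' (g x) * GammaA A g g x) * GammaA A g g x +
        2 * φ'' (g x) ^ 2 * GammaA A g g x ^ 2 +
        4 * φ' (g x) * φ'' (g x) * GammaA A g (GammaA A g g) x := by
  have hg₁ := hg.differentiable (by norm_num)
  have hA₁ k : ContDiff ℝ 1 (A k) := (hA k).of_le (by norm_num)
  have hΓ : ContDiff ℝ 2 (GammaA A g g) := contDiff_GammaA A (n := 2) hg hg hA
  have hu₁ := hu.differentiable two_ne_zero
  rw [GammaA_comp A hφ hg₁, hormL_mul A (hu.mul hu) hΓ hA₁, hormL_mul A hu hu hA₁,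
    hormL_comp A hφ' hφ'' (hg.of_le (by norm_num)) hA₁]
  beta_reduce
  rw [GammaA_comm A _ (GammaA A g g), GammaA_mul_right A (hu₁ x) (hu₁ x),
    GammaA_comm A (GammaA A g g), GammaA_comp_left A (hφ' x) (hg₁ x),
    GammaA_comp_left A (hφ' x) (hg₁ x), GammaA_comm A g (fun y => φ' (g y)),
    GammaA_comp_left A (hφ' x) (hg₁ x)]
  ring

theorem GammaA_comp_hormL_comp (hφ : ∀ y, HasDerivAt φ (φ' (g y)) (g y))
    (hφ' : ∀ y, HasDerivAt φ' (φ'' (g y)) (g y)) (hφ'' : ∀ y, HasDerivAt φ'' (φ''' (g y)) (g y))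
    (hg : ContDiff ℝ 3 g) (hA : ∀ k, ContDiff ℝ 2 (A k)) (x : H) :
    GammaA A (fun y => φ (g y)) (hormL A (fun y => φ (g y))) x =
      φ' (g x) * (φ' (g x) * GammaA A g (hormL A g) x +
        φ'' (g x) * hormL A g x * GammaA A g g x +
        φ'' (g x) * GammaA A g (GammaA A g g) x + φ''' (g x) * GammaA A g g x ^ 2) := by
  have hg₁ := hg.differentiable (by norm_num)
  have hA₁ k : ContDiff ℝ 1 (A k) := (hA k).of_le (by norm_num)
  have hu x : DifferentiableAt ℝ (fun y => φ' (g y)) x :=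
    (hφ' x).differentiableAt.fun_comp' x (hg₁ x)
  have hw x : DifferentiableAt ℝ (fun y => φ'' (g y)) x :=
    (hφ'' x).differentiableAt.fun_comp' x (hg₁ x)
  have hLg := (contDiff_hormL A (n := 1) hg hA).differentiable one_ne_zero
  have hΓ := (contDiff_GammaA A (n := 2) hg hg hA).differentiable two_ne_zero
  rw [hormL_comp A hφ hφ' (hg.of_le (by norm_num)) hA₁, GammaA_comp_left A (hφ x) (hg₁ x),
    GammaA_add_right A ((hu x).fun_mul (hLg x)) ((hw x).fun_mul (hΓ x)),
    GammaA_mul_right A (hu x) (hLg x), GammaA_mul_right A (hw x) (hΓ x),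
    GammaA_comm A g (fun y => φ' (g y)), GammaA_comp_left A (hφ' x) (hg₁ x),
    GammaA_comm A g (fun y => φ'' (g y)), GammaA_comp_left A (hφ'' x) (hg₁ x)]
  ring

theorem Gamma2A_comp {U : Set ℝ} (hU : IsOpen U) (hφ : ContDiffOn ℝ 3 φ U) (hgU : ∀ y, g y ∈ U)
    (hg : ContDiff ℝ 3 g) (hA : ∀ k, ContDiff ℝ 2 (A k)) (x : H) :
    Gamma2A A (fun y => φ (g y)) x =
      deriv φ (g x) ^ 2 * Gamma2A A g x +
        deriv φ (g x) * deriv (deriv φ) (g x) * GammaA A g (GammaA A g g) x +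
        deriv (deriv φ) (g x) ^ 2 * GammaA A g g x ^ 2 := by
  have hφ' : ContDiffOn ℝ 2 (deriv φ) U := hφ.deriv_of_isOpen hU (by norm_num)
  have hφ'' : ContDiffOn ℝ 1 (deriv (deriv φ)) U := hφ'.deriv_of_isOpen hU (by norm_num)
  have hderiv {ψ : ℝ → ℝ} {n : WithTop ℕ∞} (hψ : ContDiffOn ℝ n ψ U) (hn : n ≠ 0) (y : H) :
      HasDerivAt ψ (deriv ψ (g y)) (g y) :=
    ((hψ.contDiffAt (hU.mem_nhds (hgU y))).differentiableAt hn).hasDerivAt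
  have hu : ContDiff ℝ 2 fun y => deriv φ (g y) := hφ'.comp_contDiff (hg.of_le (by norm_num)) hgU
  rw [Gamma2A, hormL_GammaA_comp A (hderiv hφ (by norm_num)) (hderiv hφ' (by norm_num))
      (hderiv hφ'' (by norm_num)) hu hg hA,
    GammaA_comp_hormL_comp A (hderiv hφ (by norm_num)) (hderiv hφ' (by norm_num))
      (hderiv hφ'' (by norm_num)) hg hA, Gamma2A]
  ring

end ChainRule

theorem Gamma2A_log_general {H : Type*} [NormedAddCommGroup H] [InnerProductSpace ℝ H]
    {m : ℕ} (A : Fin m → H → H) (hA : ∀ k, ContDiff ℝ 2 (A k))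
    (g : H → ℝ) (hg : ContDiff ℝ 3 g) (hpos : ∀ x, 0 < g x) (x : H) :
    Gamma2A A (fun y => Real.log (g y)) x =
      (GammaA A g g x) ^ 2 / (g x) ^ 4 -
        GammaA A g (GammaA A g g) x / (g x) ^ 3 +
        Gamma2A A g x / (g x) ^ 2 := by
  rw [Gamma2A_comp A isOpen_compl_singleton Real.contDiffOn_log
    (fun y => Set.mem_compl_singleton_iff.mpr (hpos y).ne') hg hA, Real.deriv_log', deriv_inv']
  have hx : g x ≠ 0 := (hpos x).ne'
  field_simp
  ring

/-- `Γ₂(log g) = Γ(g,g)²/g⁴ - Γ(g, Γ(g,g))/g³ + Γ₂(g)/g²` for positive `g`. -/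
theorem Gamma2A_log {H : Type*} [NormedAddCommGroup H] [InnerProductSpace ℝ H]
    {m : ℕ} (hm : 1 ≤ m) (A : Fin m → H → H) (hA : ∀ k, ContDiff ℝ 2 (A k))
    (g : H → ℝ) (hg : ContDiff ℝ 3 g) (hpos : ∀ x, 0 < g x) (x : H) :
    Gamma2A A (fun y => Real.log (g y)) x =
      (GammaA A g g x) ^ 2 / (g x) ^ 4 -
        GammaA A g (GammaA A g g) x / (g x) ^ 3 +
        Gamma2A A g x / (g x) ^ 2 :=
  Gamma2A_log_general A hA g hg hpos x
end

section
/- Let H be a separable real Hilbert space with Hilbert (orthonormal) basis (e_i)_{i ∈ ℕ}, and let a : ℕ → (H → ℝ) be functions such that each a_i is Fréchet differentiable, and there are constants K_i ≥ 0 with: |a_i(x)| ≤ K_i for all x, a_i is K_i-Lipschitz, the derivative map x ↦ D a_i(x) (valued in the dual H*) is K_i-Lipschitz, and M² := ∑_{i} K_i² < ∞. Then for every x ∈ H the vector A(x) := ∑_i a_i(x)·e_i is a well-defined element of H, the series F(x) := ∑_i (D a_i(x)[A(x)])·e_i converges in H, and the resulting map F : H → H is Lipschitz with Lipschitz constant 2M²;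 i.e., |F(x) − F(y)| ≤ 2M²·|x − y| for all x, y ∈ H. -/
/-!
A Hilbert basis identifies `H` isometrically with `ℓ²`, so coefficients with `|fᵢ| ≤ Kᵢ c` give
`‖∑ fᵢ eᵢ‖ ≤ (∑ Kᵢ²)^(1/2) c = |M| c`. Hence `A` is bounded by `|M|` and `|M|`-Lipschitz, so the
coefficients `Daᵢ(x)[A(x)]` of `F` are bounded by `Kᵢ |M|` and, splitting
`Daᵢ(x)[A x] - Daᵢ(y)[A y] = (Daᵢ(x) - Daᵢ(y))[A x] + Daᵢ(y)[A x - A y]`, are `2 Kᵢ |M|`-Lipschitz;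
summing once more gives the constant `2 M²`.
-/

theorem summable_sq_of_abs_le_mul {ι : Type*} {f K : ι → ℝ} {c : ℝ}
    (hK : Summable fun i => K i ^ 2) (hf : ∀ i, |f i| ≤ K i * c) :
    Summable fun i => f i ^ 2 :=
  (hK.mul_right (c ^ 2)).of_nonneg_of_le (fun _ => sq_nonneg _) fun i =>
    (sq_le_sq.2 ((hf i).trans (le_abs_self _))).trans_eq (mul_pow _ _ _)

theorem ContinuousLinearMap.norm_apply_sub_apply_le {𝕜 E F : Type*}
    [NontriviallyNormedField 𝕜] [NormedAddCommGroup E] [NormedSpace 𝕜 E]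
    [NormedAddCommGroup F] [NormedSpace 𝕜 F] {L₁ L₂ : E →L[𝕜] F} {v w : E} {K S δ : ℝ}
    (hL : ‖L₁ - L₂‖ ≤ K * δ) (hL₂ : ‖L₂‖ ≤ K) (hv : ‖v‖ ≤ S) (hvw : ‖v - w‖ ≤ S * δ) :
    ‖L₁ v - L₂ w‖ ≤ 2 * K * S * δ :=
  calc ‖L₁ v - L₂ w‖ = ‖(L₁ - L₂) v + L₂ (v - w)‖ := by simp
    _ ≤ ‖(L₁ - L₂) v‖ + ‖L₂ (v - w)‖ := norm_add_le _ _
    _ ≤ K * δ * S + K * (S * δ) :=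
        add_le_add (le_of_opNorm_le_of_le _ hL hv) (le_of_opNorm_le_of_le _ hL₂ hvw)
    _ = 2 * K * S * δ := by ring

namespace HilbertBasis

variable {ι H : Type*} [NormedAddCommGroup H] [InnerProductSpace ℝ H]
  (b : HilbertBasis ι ℝ H) {f g K : ι → ℝ} {c : ℝ}

theorem memℓp_two_of_summable_sq (hf : Summable fun i => f i ^ 2) : Memℓp f 2 :=
  (memℓp_gen_iff (by norm_num)).2 (by simpa [Real.norm_eq_abs, sq_abs] using hf)

theorem hasSum_smul_of_summable_sq (hf : Summable fun i => f i ^ 2) :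
    HasSum (fun i => f i • b i) (b.repr.symm ⟨f, memℓp_two_of_summable_sq hf⟩) :=
  b.hasSum_repr_symm _

theorem norm_tsum_smul_sq (hf : Summable fun i => f i ^ 2) :
    ‖∑' i, f i • b i‖ ^ 2 = ∑' i, f i ^ 2 := by
  rw [(b.hasSum_smul_of_summable_sq hf).tsum_eq, LinearIsometryEquiv.norm_map]
  simpa [Real.norm_eq_abs, sq_abs] using
    lp.norm_rpow_eq_tsum (p := 2) (by norm_num) ⟨f, memℓp_two_of_summable_sq hf⟩

theorem summable_smul_of_abs_le_mul (hK : Summable fun i => K i ^ 2)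
    (hf : ∀ i, |f i| ≤ K i * c) : Summable fun i => f i • b i :=
  (b.hasSum_smul_of_summable_sq (summable_sq_of_abs_le_mul hK hf)).summable

theorem norm_tsum_smul_le (hK : Summable fun i => K i ^ 2) (hc : 0 ≤ c)
    (hf : ∀ i, |f i| ≤ K i * c) : ‖∑' i, f i • b i‖ ≤ √(∑' i, K i ^ 2) * c := by
  have hf₂ := summable_sq_of_abs_le_mul hK hf
  have hfK : ∀ i, f i ^ 2 ≤ K i ^ 2 * c ^ 2 := fun i =>
    (sq_le_sq.2 ((hf i).trans (le_abs_self _))).trans_eq (mul_pow _ _ _)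
  calc ‖∑' i, f i • b i‖ = √(∑' i, f i ^ 2) := by
        rw [← b.norm_tsum_smul_sq hf₂, Real.sqrt_sq (norm_nonneg _)]
    _ ≤ √(∑' i, K i ^ 2 * c ^ 2) := Real.sqrt_le_sqrt (hf₂.tsum_le_tsum hfK (hK.mul_right _))
    _ = √(∑' i, K i ^ 2) * c := by
        rw [tsum_mul_right, Real.sqrt_mul' _ (sq_nonneg c), Real.sqrt_sq hc]

theorem norm_tsum_smul_sub_tsum_smul_le (hK : Summable fun i => K i ^ 2) (hc : 0 ≤ c)
    (hf : Summable fun i => f i • b i) (hg : Summable fun i => g i • b i)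
    (hfg : ∀ i, |f i - g i| ≤ K i * c) :
    ‖(∑' i, f i • b i) - ∑' i, g i • b i‖ ≤ √(∑' i, K i ^ 2) * c := by
  rw [← hf.tsum_sub hg]
  simpa only [sub_smul] using b.norm_tsum_smul_le hK hc hfg

end HilbertBasis

theorem ito_drift_lipschitz_general {H : Type*} [NormedAddCommGroup H] [InnerProductSpace ℝ H]
    (b : HilbertBasis ℕ ℝ H) (a : ℕ → H → ℝ) (K : ℕ → ℝ)
    (hbd : ∀ i x, |a i x| ≤ K i)
    (hlipa : ∀ i x y, |a i x - a i y| ≤ K i * ‖x - y‖)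
    (hlipD : ∀ i x y, ‖fderiv ℝ (a i) x - fderiv ℝ (a i) y‖ ≤ K i * ‖x - y‖)
    (M : ℝ) (hM2 : Summable fun i => K i ^ 2) (hMsq : M ^ 2 = ∑' i, K i ^ 2) :
    (∀ x : H, Summable fun i => a i x • (b i : H)) ∧
    (∀ x : H,
      Summable fun i =>
        (fderiv ℝ (a i) x (∑' j, a j x • (b j : H))) • (b i : H)) ∧
    (∀ x y : H,
      ‖(∑' i, (fderiv ℝ (a i) x (∑' j, a j x • (b j : H))) • (b i : H)) -
          (∑' i, (fderiv ℝ (a i) y (∑' j, a j y • (b j : H))) • (b i : H))‖ ≤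
        2 * M ^ 2 * ‖x - y‖) := by
  set S := √(∑' i, K i ^ 2)
  have hSM : S ^ 2 = M ^ 2 := by rw [hMsq, Real.sq_sqrt (tsum_nonneg fun i => sq_nonneg _)]
  have hbd₁ : ∀ i x, |a i x| ≤ K i * 1 := by simpa using hbd
  have hDa : ∀ i x, ‖fderiv ℝ (a i) x‖ ≤ K i := fun i x =>
    norm_fderiv_le_of_lip' ℝ ((abs_nonneg _).trans (hbd i x))
      (.of_forall fun y => hlipa i y x)
  have hA : ∀ x, Summable fun i => a i x • (b i : H) := fun x =>
    b.summable_smul_of_abs_le_mul hM2 (hbd₁ · x)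
  set A := fun x => ∑' j, a j x • (b j : H)
  have hA_le : ∀ x, ‖A x‖ ≤ S := fun x => by
    simpa using b.norm_tsum_smul_le hM2 zero_le_one (hbd₁ · x)
  have hA_sub : ∀ x y, ‖A x - A y‖ ≤ S * ‖x - y‖ := fun x y =>
    b.norm_tsum_smul_sub_tsum_smul_le hM2 (norm_nonneg _) (hA x) (hA y) (hlipa · x y)
  have hF_coeff : ∀ i x, |fderiv ℝ (a i) x (A x)| ≤ K i * S := fun i x =>
    (fderiv ℝ (a i) x).le_of_opNorm_le_of_le (hDa i x) (hA_le x)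
  have hF_coeff_sub : ∀ i x y,
      |fderiv ℝ (a i) x (A x) - fderiv ℝ (a i) y (A y)| ≤ K i * (2 * S * ‖x - y‖) :=
    fun i x y => by
      simpa only [Real.norm_eq_abs, mul_left_comm, mul_assoc] using
        ContinuousLinearMap.norm_apply_sub_apply_le (hlipD i x y) (hDa i y) (hA_le x) (hA_sub x y)
  have hF : ∀ x, Summable fun i => fderiv ℝ (a i) x (A x) • (b i : H) := fun x =>
    b.summable_smul_of_abs_le_mul hM2 (hF_coeff · x)
  refine ⟨hA, hF, fun x y => ?_⟩
  calc _ ≤ S * (2 * S * ‖x - y‖) := b.norm_tsum_smul_sub_tsum_smul_le hM2 (by positivity)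
        (hF x) (hF y) (hF_coeff_sub · x y)
    _ = 2 * M ^ 2 * ‖x - y‖ := by rw [← hSM]; ring

/-- Lipschitz estimate on the Itô-correction drift `F(x) = ∑ᵢ (Daᵢ(x)[A(x)]) eᵢ`, where
`A(x) = ∑ᵢ aᵢ(x) eᵢ`, for coefficients `aᵢ` with `C¹,¹`-norms `Kᵢ` square-summable with
`∑ Kᵢ² = M²`: `A(x)` and `F(x)` are well-defined elements of `H`, and
`|F(x) - F(y)| ≤ 2M²|x - y|`. -/
theorem ito_drift_lipschitz {H : Type*} [NormedAddCommGroup H] [InnerProductSpace ℝ H]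
    [CompleteSpace H] (b : HilbertBasis ℕ ℝ H) (a : ℕ → H → ℝ) (K : ℕ → ℝ)
    (hK : ∀ i, 0 ≤ K i)
    (hdiff : ∀ i, Differentiable ℝ (a i))
    (hbd : ∀ i x, |a i x| ≤ K i)
    (hlipa : ∀ i x y, |a i x - a i y| ≤ K i * ‖x - y‖)
    (hlipD : ∀ i x y, ‖fderiv ℝ (a i) x - fderiv ℝ (a i) y‖ ≤ K i * ‖x - y‖)
    (M : ℝ) (hM2 : Summable fun i => K i ^ 2) (hMsq : M ^ 2 = ∑' i, K i ^ 2) :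
    (∀ x : H, Summable fun i => a i x • (b i : H)) ∧
    (∀ x : H,
      Summable fun i =>
        (fderiv ℝ (a i) x (∑' j, a j x • (b j : H))) • (b i : H)) ∧
    (∀ x y : H,
      ‖(∑' i, (fderiv ℝ (a i) x (∑' j, a j x • (b j : H))) • (b i : H)) -
          (∑' i, (fderiv ℝ (a i) y (∑' j, a j y • (b j : H))) • (b i : H))‖ ≤
        2 * M ^ 2 * ‖x - y‖) :=
  ito_drift_lipschitz_general b a K hbd hlipa hlipD M hM2 hMsq
end

section
/- Let t > 0 and let x : ℕ → ℝ be a sequence with ∑_j x_j² < ∞. For each j ≥ 1 let ν_j be the real Gaussian measure with mean exp(−j⁶·t)·x_j and variance (1 − exp(−2 j⁶ t))/(2 j⁶). Then the series ∑_j ν_j({ y ∈ ℝ : |y| > j^{−1/4} }) converges. -/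
/-!
For `Y ~ N(m, v)`, Markov's inequality for `Y ^ 2` gives `P(|Y| > r) ≤ (m ^ 2 + v) / r ^ 2`.
With `r = j^{-1/4}` we have `r⁻² ≤ j`. The variance is at most `1 / (2 j⁶)`, contributing
`O(j⁻⁵)`, and the mean contributes `j e^{-2 j⁶ t} x_j ^ 2 ≤ j⁶ e^{-2 j⁶ t} x_j ^ 2`, which is at
most `x_j ^ 2 / (2 t)` since `u e^{-u} ≤ 1`; both are summable.
-/

open MeasureTheory ProbabilityTheory Real

open scoped NNReal

lemma integral_sq_gaussianReal (m : ℝ) (v : ℝ≥0) :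
    ∫ y, y ^ 2 ∂gaussianReal m v = m ^ 2 + v := by
  have h := variance_eq_sub (memLp_id_gaussianReal (μ := m) (v := v) 2)
  simp only [variance_id_gaussianReal, Pi.pow_apply, id_eq, integral_id_gaussianReal] at h
  linarith

lemma measure_lt_abs_le_integral_sq_div {μ : Measure ℝ} (h : Integrable (fun y => y ^ 2) μ)
    {r : ℝ} (hr : 0 < r) :
    μ {y | r < |y|} ≤ ENNReal.ofReal ((∫ y, y ^ 2 ∂μ) / r ^ 2) := by
  have hsub : {y : ℝ | r < |y|} ⊆ {y | ENNReal.ofReal (r ^ 2) ≤ ENNReal.ofReal (y ^ 2)} :=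
    fun y hy => ENNReal.ofReal_le_ofReal (by simpa [sq_abs] using pow_le_pow_left₀ hr.le hy.le 2)
  calc μ {y | r < |y|}
      ≤ (∫⁻ y, ENNReal.ofReal (y ^ 2) ∂μ) / ENNReal.ofReal (r ^ 2) :=
        (measure_mono hsub).trans <| meas_ge_le_lintegral_div
          (by fun_prop) (by positivity) ENNReal.ofReal_ne_top
    _ = ENNReal.ofReal ((∫ y, y ^ 2 ∂μ) / r ^ 2) := by
        rw [← ofReal_integral_eq_lintegral_ofReal h (ae_of_all _ fun y => sq_nonneg y),
          ENNReal.ofReal_div_of_pos (by positivity)]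

lemma gaussianReal_lt_abs_le (m : ℝ) (v : ℝ≥0) {r : ℝ} (hr : 0 < r) :
    gaussianReal m v {y | r < |y|} ≤ ENNReal.ofReal ((m ^ 2 + v) / r ^ 2) := by
  rw [← integral_sq_gaussianReal]
  exact measure_lt_abs_le_integral_sq_div (memLp_id_gaussianReal 2).integrable_sq hr

lemma tsum_gaussianReal_lt_abs_lt_top {m : ℕ → ℝ} {v : ℕ → ℝ≥0} {r : ℕ → ℝ}
    (hr : ∀ j, 0 < r j) (h : Summable fun j => (m j ^ 2 + v j) / r j ^ 2) :
    ∑' j, gaussianReal (m j) (v j) {y | r j < |y|} < ⊤ :=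
  calc ∑' j, gaussianReal (m j) (v j) {y | r j < |y|}
      ≤ ∑' j, ENNReal.ofReal ((m j ^ 2 + v j) / r j ^ 2) :=
        ENNReal.tsum_le_tsum fun j => gaussianReal_lt_abs_le _ _ (hr j)
    _ = ENNReal.ofReal (∑' j, (m j ^ 2 + v j) / r j ^ 2) :=
        (ENNReal.ofReal_tsum_of_nonneg (fun j => by positivity) h).symm
    _ < ⊤ := ENNReal.ofReal_lt_top

-- Mean and variance at time `t` of `dX = -a X dt + dW` started at `x`.
noncomputable def ouMean (t a x : ℝ) : ℝ := exp (-a * t) * x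

noncomputable def ouVar (t a : ℝ) : ℝ := (1 - exp (-2 * a * t)) / (2 * a)

lemma sq_ouMean_mul_le {t : ℝ} (ht : 0 < t) (a x : ℝ) :
    ouMean t a x ^ 2 * a ≤ x ^ 2 / (2 * t) := by
  have hmul_exp : 2 * a * t * exp (-(2 * a * t)) ≤ 1 :=
    (mul_exp_neg_le_exp_neg_one _).trans (exp_le_one_iff.2 (by norm_num))
  have hexp : exp (-a * t) ^ 2 = exp (-(2 * a * t)) := by rw [← exp_nat_mul]; ring_nf
  rw [ouMean, mul_pow, hexp, le_div_iff₀ (by positivity)]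
  nlinarith [sq_nonneg x]

lemma ouVar_le (t : ℝ) {a : ℝ} (ha : 0 < a) : ouVar t a ≤ 1 / (2 * a) := by
  unfold ouVar
  gcongr
  linarith [exp_pos (-2 * a * t)]

lemma inv_le_sq_rpow_neg_one_div_four {n : ℝ} (hn : 1 ≤ n) :
    n⁻¹ ≤ (n ^ (-(1 : ℝ) / 4)) ^ 2 := by
  rw [← rpow_natCast, ← rpow_mul (by linarith), ← rpow_neg_one]
  exact rpow_le_rpow_of_exponent_le hn (by norm_num)

lemma ouMean_sq_add_ouVar_div_sq_le {t : ℝ} (ht : 0 < t) {n : ℝ} (hn : 1 ≤ n) (x : ℝ) :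
    (ouMean t (n ^ 6) x ^ 2 + (ouVar t (n ^ 6)).toNNReal) / (n ^ (-(1 : ℝ) / 4)) ^ 2
      ≤ x ^ 2 / (2 * t) + 1 / (2 * n ^ 5) := by
  have hn0 : 0 < n := by linarith
  have hmean : ouMean t (n ^ 6) x ^ 2 * n ≤ x ^ 2 / (2 * t) :=
    (mul_le_mul_of_nonneg_left (le_self_pow₀ hn (by norm_num)) (sq_nonneg _)).trans
      (sq_ouMean_mul_le ht _ x)
  have hvar : ((ouVar t (n ^ 6)).toNNReal : ℝ) * n ≤ 1 / (2 * n ^ 5) := by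
    calc ((ouVar t (n ^ 6)).toNNReal : ℝ) * n ≤ 1 / (2 * n ^ 6) * n := by
          gcongr
          exact Real.coe_toNNReal' _ ▸ max_le (ouVar_le t (by positivity)) (by positivity)
      _ = 1 / (2 * n ^ 5) := by field_simp
  calc (ouMean t (n ^ 6) x ^ 2 + (ouVar t (n ^ 6)).toNNReal) / (n ^ (-(1 : ℝ) / 4)) ^ 2
      ≤ (ouMean t (n ^ 6) x ^ 2 + (ouVar t (n ^ 6)).toNNReal) / n⁻¹ := by
        gcongr
        exact inv_le_sq_rpow_neg_one_div_four hn
    _ ≤ x ^ 2 / (2 * t) + 1 / (2 * n ^ 5) := by rw [div_inv_eq_mul, add_mul]; linarith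

/-- For `t > 0` and a square-summable sequence `x`, the Gaussian probabilities that the
`j`-th Ornstein-Uhlenbeck coordinate (eigenvalue `a_j = j⁶`, mean `e^{-j⁶ t} x_j`, variance
`(1 - e^{-2 j⁶ t})/(2 j⁶)`) exceeds `j^{-1/4}` in absolute value are summable over `j ≥ 1`. -/
theorem OU_coupling_gaussian_tail_summable
    (t : ℝ) (ht : 0 < t) (x : ℕ → ℝ) (hx : Summable fun j => x j ^ 2) :
    (∑' j : ℕ,
        gaussianReal (Real.exp (-((j + 1 : ℕ) : ℝ) ^ 6 * t) * x (j + 1))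
          (((1 - Real.exp (-2 * ((j + 1 : ℕ) : ℝ) ^ 6 * t)) /
            (2 * ((j + 1 : ℕ) : ℝ) ^ 6)).toNNReal)
          {y : ℝ | ((j + 1 : ℕ) : ℝ) ^ (-(1 : ℝ) / 4) < |y|}) < ⊤ := by
  have hpow : Summable fun j : ℕ => 1 / (2 * ((j + 1 : ℕ) : ℝ) ^ 5) :=
    (((summable_nat_add_iff 1).2 (summable_one_div_nat_pow (p := 5).2 (by norm_num))).div_const
      2).congr fun j => by field_simp
  have hbound : Summable fun j : ℕ =>
      x (j + 1) ^ 2 / (2 * t) + 1 / (2 * ((j + 1 : ℕ) : ℝ) ^ 5) :=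
    (((summable_nat_add_iff 1).2 hx).div_const _).add hpow
  refine tsum_gaussianReal_lt_abs_lt_top
    (m := fun j => ouMean t (((j + 1 : ℕ) : ℝ) ^ 6) (x (j + 1)))
    (v := fun j => (ouVar t (((j + 1 : ℕ) : ℝ) ^ 6)).toNNReal) (fun j => by positivity) ?_
  refine hbound.of_nonneg_of_le (fun j => by positivity) fun j => ?_
  exact ouMean_sq_add_ouVar_div_sq_le ht (by norm_cast; omega) _
end
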